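/- Consider the LTI system x_{k+1} = A x_k + B u_k with data trajectory (u^d, x^d) of length T such that [X_{1,1,T−L+1}; U_{1,L,T−L+1}] is full row rank. Then the set of length-L trajectories of the system equals exactly the column space image: {(u_{[1,L]}, x_{[1,L]}) : trajectory} = { ([U_{1,L,T−L+1}; X_{1,L,T−L+1}] g) : g ∈ ℝ^{T−L+1} } (with the obvious splitting into input and state components). -/
import Mathlib


open Matrix
set_option maxHeartbeats 2000000

/-- Depth-`L` Hankel matrix with `C` columns of a `T`-long vector-valued signal. -/
def hankel {q T : ℕ} (L C : ℕ) (h : L + C ≤ T + 1) (w : Fin T → Fin q → ℝ) :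
    Matrix (Fin L × Fin q) (Fin C) ℝ :=
  fun p j => w ⟨p.1.val + j.val, by have := p.1.isLt; have := j.isLt; omega⟩ p.2

/-- Willems' Fundamental Lemma, both directions combined:
under persistency of excitation, the set of length-`L` input/state trajectories
of the LTI system equals the image of the stacked data Hankel matrix. -/
theorem lti_fundamental_lemma_set_eq {n m L T : ℕ} (hL : 1 ≤ L) (hLT : L ≤ T)
    (A : Matrix (Fin n) (Fin n) ℝ) (B : Matrix (Fin n) (Fin m) ℝ)
    (ud : Fin T → Fin m → ℝ) (xd : Fin T → Fin n → ℝ)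
    (hdata : ∀ k : Fin (T - 1),
      xd ⟨k.val + 1, by have := k.isLt; omega⟩ =
        A *ᵥ xd ⟨k.val, by have := k.isLt; omega⟩
          + B *ᵥ ud ⟨k.val, by have := k.isLt; omega⟩)
    (hrank : Matrix.rank (Matrix.of fun (r : Fin n ⊕ (Fin L × Fin m)) (j : Fin (T - L + 1)) =>
        Sum.elim
          (fun a : Fin n => xd ⟨j.val, by have := j.isLt; omega⟩ a)
          (fun p : Fin L × Fin m => hankel L (T - L + 1) (by omega) ud p j) r)
      = n + m * L) :
    {p : (Fin L → Fin m → ℝ) × (Fin L → Fin n → ℝ) |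
        ∀ i : Fin (L - 1),
          p.2 ⟨i.val + 1, by have := i.isLt; omega⟩ =
            A *ᵥ p.2 ⟨i.val, by have := i.isLt; omega⟩
              + B *ᵥ p.1 ⟨i.val, by have := i.isLt; omega⟩} =
    {p : (Fin L → Fin m → ℝ) × (Fin L → Fin n → ℝ) |
        ∃ g : Fin (T - L + 1) → ℝ,
          (∀ q : Fin L × Fin m,
            p.1 q.1 q.2 = (hankel L (T - L + 1) (by omega) ud *ᵥ g) q) ∧
          (∀ q : Fin L × Fin n,
            p.2 q.1 q.2 = (hankel L (T - L + 1) (by omega) xd *ᵥ g) q)} := by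
  have hb : L + (T - L + 1) ≤ T + 1 := by omega
  -- the key Hankel shift identity
  have hstep : ∀ (g : Fin (T - L + 1) → ℝ) (i : ℕ) (hi1 : i + 1 < L) (a : Fin n),
      (hankel L (T - L + 1) hb xd *ᵥ g) (⟨i + 1, hi1⟩, a) =
        (A *ᵥ fun b => (hankel L (T - L + 1) hb xd *ᵥ g) (⟨i, by omega⟩, b)) a
          + (B *ᵥ fun c => (hankel L (T - L + 1) hb ud *ᵥ g) (⟨i, by omega⟩, c)) a := by
    intro g i hi1 a
    have key : ∀ j : Fin (T - L + 1),
        xd ⟨i + 1 + j.val, by have := j.isLt; omega⟩ a =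
          (∑ b, A a b * xd ⟨i + j.val, by have := j.isLt; omega⟩ b)
            + ∑ c, B a c * ud ⟨i + j.val, by have := j.isLt; omega⟩ c := by
      intro j
      have hk : i + j.val < T - 1 := by have := j.isLt; omega
      have h := congrFun (hdata ⟨i + j.val, hk⟩) a
      simp only [mulVec, dotProduct, Pi.add_apply] at h
      convert h using 3 <;> omega
    simp only [mulVec, dotProduct, hankel, Finset.mul_sum]
    calc ∑ j : Fin (T - L + 1), xd ⟨i + 1 + j.val, by have := j.isLt; omega⟩ a * g j
        = ∑ j : Fin (T - L + 1),
            ((∑ b, A a b * (xd ⟨i + j.val, by have := j.isLt; omega⟩ b * g j))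
              + ∑ c, B a c * (ud ⟨i + j.val, by have := j.isLt; omega⟩ c * g j)) := by
          refine Finset.sum_congr rfl fun j _ => ?_
          rw [key j, add_mul, Finset.sum_mul, Finset.sum_mul]
          simp [mul_assoc]
      _ = _ := by
          rw [Finset.sum_add_distrib, Finset.sum_comm, Finset.sum_comm (γ := Fin (T - L + 1))]
  ext p
  simp only [Set.mem_setOf_eq]
  constructor
  · intro hp
    set M : Matrix (Fin n ⊕ (Fin L × Fin m)) (Fin (T - L + 1)) ℝ :=
      Matrix.of fun r j => Sum.elim
        (fun a : Fin n => xd ⟨j.val, by have := j.isLt; omega⟩ a)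
        (fun q : Fin L × Fin m => hankel L (T - L + 1) hb ud q j) r with hM
    have hrank' : M.rank = n + m * L := hrank
    have hsurj : Function.Surjective M.mulVecLin := by
      rw [← LinearMap.range_eq_top]
      apply Submodule.eq_top_of_finrank_eq
      have h1 : Module.finrank ℝ ↥(LinearMap.range M.mulVecLin) = M.rank := rfl
      rw [h1, hrank', Module.finrank_fintype_fun_eq_card]
      simp [mul_comm]
    obtain ⟨g, hg⟩ := hsurj (Sum.elim (fun a => p.2 ⟨0, by omega⟩ a) (fun q => p.1 q.1 q.2))
    rw [Matrix.mulVecLin_apply] at hg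
    have hgu : ∀ q : Fin L × Fin m, p.1 q.1 q.2 = (hankel L (T - L + 1) hb ud *ᵥ g) q := by
      intro q
      have h := congrFun hg (Sum.inr q)
      simpa [hM, mulVec, dotProduct] using h.symm
    have hg0 : ∀ a : Fin n, p.2 ⟨0, by omega⟩ a =
        (hankel L (T - L + 1) hb xd *ᵥ g) (⟨0, by omega⟩, a) := by
      intro a
      have h := congrFun hg (Sum.inl a)
      simp only [hM, mulVec, dotProduct, Matrix.of_apply, Sum.elim_inl, hankel] at h ⊢
      rw [← h]
      exact Finset.sum_congr rfl fun j _ => by norm_num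
    have hx : ∀ (i : ℕ) (hi : i < L) (a : Fin n),
        p.2 ⟨i, hi⟩ a = (hankel L (T - L + 1) hb xd *ᵥ g) (⟨i, hi⟩, a) := by
      intro i
      induction i with
      | zero => intro hi a; exact hg0 a
      | succ i ih =>
        intro hi a
        have hi' : i < L - 1 := by omega
        have h := congrFun (hp ⟨i, hi'⟩) a
        simp only [Fin.val_mk] at h
        rw [hstep g i hi a]
        calc p.2 ⟨i + 1, hi⟩ a
            = (A *ᵥ p.2 ⟨i, by omega⟩ + B *ᵥ p.1 ⟨i, by omega⟩) a := h
          _ = _ := by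
              simp only [Pi.add_apply, mulVec, dotProduct]
              congr 1
              · exact Finset.sum_congr rfl fun b _ => by rw [ih (by omega) b]; rfl
              · exact Finset.sum_congr rfl fun c _ => by rw [hgu (⟨i, by omega⟩, c)]; rfl
    exact ⟨g, hgu, fun q => hx q.1.val q.1.isLt q.2⟩
  · rintro ⟨g, hgu, hgx⟩ i
    funext a
    have hi1 : i.val + 1 < L := by have := i.isLt; omega
    have h2 : (fun b => (hankel L (T - L + 1) hb xd *ᵥ g) (⟨i.val, by omega⟩, b))
        = p.2 ⟨i.val, by omega⟩ := funext fun b => (hgx (⟨i.val, by omega⟩, b)).symm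
    have h1 : (fun c => (hankel L (T - L + 1) hb ud *ᵥ g) (⟨i.val, by omega⟩, c))
        = p.1 ⟨i.val, by omega⟩ := funext fun c => (hgu (⟨i.val, by omega⟩, c)).symm
    calc p.2 ⟨i.val + 1, by have := i.isLt; omega⟩ a
        = (hankel L (T - L + 1) hb xd *ᵥ g) (⟨i.val + 1, hi1⟩, a) :=
          hgx (⟨i.val + 1, hi1⟩, a)
      _ = (A *ᵥ fun b => (hankel L (T - L + 1) hb xd *ᵥ g) (⟨i.val, by omega⟩, b)) a
            + (B *ᵥ fun c => (hankel L (T - L + 1) hb ud *ᵥ g) (⟨i.val, by omega⟩, c)) a :=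
          hstep g i.val hi1 a
      _ = (A *ᵥ p.2 ⟨i.val, by omega⟩ + B *ᵥ p.1 ⟨i.val, by omega⟩) a := by rw [h2, h1]; rfl
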